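/- arXiv:2211.16652 — 4 statements merged into one kernel-verified Lean document; each statement's English description precedes it below -/
import Mathlib

section
/- Let 0 ≤ a < b ≤ 1 and let ρ : [a,b] → ℝ be continuously differentiable with 0 ≤ ρ(ξ) < 1/2 for all ξ ∈ [a,b] and satisfying the reduced ODE (1 − 2ρ(ξ)) ρ'(ξ) = −g(ξ) ρ(ξ)(1 − ρ(ξ)) on [a,b]. Then, with c := k(a) ρ(a)(1 − ρ(a)), one has 4c ≤ k(ξ) and ρ(ξ) = (1/2)(1 − √(1 − 4c/k(ξ))) for every ξ ∈ [a,b]; i.e., orbits of the reduced problem below the fold line are exactly the level lines of H(ξ,ρ) = k(ξ) ρ (1 − ρ). -/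
open Set

/-!
Along a solution of the reduced ODE the function `H(ξ,ρ) = k(ξ) ρ (1 - ρ)` is a first integral:
`d/dξ H(ξ,ρ(ξ)) = k (g ρ (1 - ρ) + (1 - 2ρ) ρ')`, and the ODE makes the bracket vanish. So
`k(ξ) ρ(ξ) (1 - ρ(ξ)) = c` on `[a,b]`, and solving this quadratic in `ρ` on the branch `ρ ≤ 1/2`
gives `1 - 4c/k(ξ) = (1 - 2ρ(ξ))²` and hence the lower root.
-/

theorem hasDerivWithinAt_level_function_zero {k ρ : ℝ → ℝ} {k' ρ' ξ : ℝ} {s : Set ℝ}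
    (hk : HasDerivWithinAt k k' s ξ) (hρ : HasDerivWithinAt ρ ρ' s ξ) (hk0 : k ξ ≠ 0)
    (hode : (1 - 2 * ρ ξ) * ρ' = -(k' / k ξ) * ρ ξ * (1 - ρ ξ)) :
    HasDerivWithinAt (fun x => k x * (ρ x * (1 - ρ x))) 0 s ξ := by
  refine (hk.mul (hρ.mul (hρ.const_sub 1))).congr_deriv ?_
  simp only [Pi.mul_apply]
  field_simp at hode
  linear_combination hode

theorem level_line_lower_branch {K r : ℝ} (hK : 0 < K) (hr : r ≤ 1 / 2) :
    4 * (K * (r * (1 - r))) ≤ K ∧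
      r = 1 / 2 * (1 - Real.sqrt (1 - 4 * (K * (r * (1 - r))) / K)) := by
  have hsq : 1 - 4 * (K * (r * (1 - r))) / K = (1 - 2 * r) ^ 2 := by
    field_simp
    ring
  refine ⟨by nlinarith [sq_nonneg (1 - 2 * r)], ?_⟩
  rw [hsq, Real.sqrt_sq (by linarith)]
  ring

theorem reduced_ode_level_line_below_fold_general
    (k : ℝ → ℝ)
    (hk : ContDiff ℝ 2 k)
    (hkpos : ∀ x ∈ Icc (0:ℝ) 1, 0 < k x)
    (a b : ℝ) (ha : 0 ≤ a) (hb : b ≤ 1)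
    (ρ ρ' : ℝ → ℝ)
    (hρ : ∀ ξ ∈ Icc a b, HasDerivWithinAt ρ (ρ' ξ) (Icc a b) ξ)
    (hrange : ∀ ξ ∈ Icc a b, 0 ≤ ρ ξ ∧ ρ ξ < 1/2)
    (hode : ∀ ξ ∈ Icc a b,
      (1 - 2 * ρ ξ) * ρ' ξ = -(deriv k ξ / k ξ) * ρ ξ * (1 - ρ ξ)) :
    ∀ ξ ∈ Icc a b,
      4 * (k a * (ρ a * (1 - ρ a))) ≤ k ξ ∧
      ρ ξ = 1/2 * (1 - Real.sqrt (1 - 4 * (k a * (ρ a * (1 - ρ a))) / k ξ)) := by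
  have hkpos' : ∀ ξ ∈ Icc a b, 0 < k ξ := fun ξ hξ => hkpos ξ (Icc_subset_Icc ha hb hξ)
  have hH : ∀ ξ ∈ Icc a b,
      HasDerivWithinAt (fun x => k x * (ρ x * (1 - ρ x))) 0 (Icc a b) ξ := fun ξ hξ =>
    hasDerivWithinAt_level_function_zero
      ((hk.differentiable (by norm_num) ξ).hasDerivAt.hasDerivWithinAt) (hρ ξ hξ)
      (hkpos' ξ hξ).ne' (hode ξ hξ)
  intro ξ hξ
  have hlevel : k ξ * (ρ ξ * (1 - ρ ξ)) = k a * (ρ a * (1 - ρ a)) := by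
    have := norm_image_sub_le_of_norm_deriv_le_segment' hH (fun _ _ => norm_zero.le) ξ hξ
    rwa [zero_mul, norm_le_zero_iff, sub_eq_zero] at this
  rw [← hlevel]
  exact level_line_lower_branch (hkpos' ξ hξ) (hrange ξ hξ).2.le

/-- A continuously differentiable solution of the reduced ODE staying strictly
below the fold line `ρ = 1/2` on `[a,b] ⊆ [0,1]` is exactly the lower branch of the level
line of `H(ξ,ρ) = k(ξ)ρ(1-ρ)` through its initial point: with `c = k(a)ρ(a)(1-ρ(a))` one has
`4c ≤ k(ξ)` and `ρ(ξ) = (1/2)(1 - √(1 - 4c/k(ξ)))` on `[a,b]`. -/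
theorem reduced_ode_level_line_below_fold
    (k : ℝ → ℝ) (ξs : ℝ)
    (hk : ContDiff ℝ 2 k)
    (hkpos : ∀ x ∈ Icc (0:ℝ) 1, 0 < k x)
    (hξs : ξs ∈ Ioo (0:ℝ) 1)
    (hmin : ∀ x ∈ Icc (0:ℝ) 1, x ≠ ξs → k ξs < k x)
    (hk's : deriv k ξs = 0)
    (hk''s : 0 < deriv (deriv k) ξs)
    (a b : ℝ) (ha : 0 ≤ a) (hab : a < b) (hb : b ≤ 1)
    (ρ ρ' : ℝ → ℝ)
    (hρ : ∀ ξ ∈ Icc a b, HasDerivWithinAt ρ (ρ' ξ) (Icc a b) ξ)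
    (hρ'cont : ContinuousOn ρ' (Icc a b))
    (hrange : ∀ ξ ∈ Icc a b, 0 ≤ ρ ξ ∧ ρ ξ < 1/2)
    (hode : ∀ ξ ∈ Icc a b,
      (1 - 2 * ρ ξ) * ρ' ξ = -(deriv k ξ / k ξ) * ρ ξ * (1 - ρ ξ)) :
    ∀ ξ ∈ Icc a b,
      4 * (k a * (ρ a * (1 - ρ a))) ≤ k ξ ∧
      ρ ξ = 1/2 * (1 - Real.sqrt (1 - 4 * (k a * (ρ a * (1 - ρ a))) / k ξ)) :=
  reduced_ode_level_line_below_fold_general k hk hkpos a b ha hb ρ ρ' hρ hrange hode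
end

section
/- Define the canard function ρ_Sc : [0,1] → ℝ by ρ_Sc(ξ) = ρ_c^+(ξ) for 0 ≤ ξ ≤ ξ* and ρ_Sc(ξ) = ρ_c^−(ξ) for ξ* ≤ ξ ≤ 1. Then ρ_Sc is differentiable on (0,1), satisfies the reduced ODE (1 − 2ρ_Sc(ξ)) ρ_Sc'(ξ) = −g(ξ) ρ_Sc(ξ)(1 − ρ_Sc(ξ)) for all ξ ∈ (0,1), and its derivative at the canard point is ρ_Sc'(ξ*) = −(1/2)√(k''(ξ*)/(2 k(ξ*))); in particular the singular canard passes smoothly through the folded-saddle point (ξ*, 1/2), crossing from ρ > 1/2 to ρ < 1/2. -/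
/-!
Both branches satisfy the first integral `ρ (1 - ρ) k = k(ξ*) / 4` wherever `k ≥ k(ξ*)`, and
differentiating it gives the reduced ODE at every point where `ρ_Sc` is differentiable. Away from
`ξ*` differentiability is that of `√(1 - k(ξ*)/k)`, whose radicand is positive there. At `ξ*`
the branch sign and the sign of `ξ - ξ*` cancel, so on both sides
`(ρ_Sc(ξ) - 1/2) / (ξ - ξ*) = -(1/2) √((1 - k(ξ*)/k(ξ)) / (ξ - ξ*)²)`; the radicand vanishes to
second order at the critical point `ξ*`, and L'Hôpital's rule sends the quotient to
`k''(ξ*) / (2 k(ξ*))`.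
-/

open Set

/-- Upper canard branch `ρ_c^+(ξ) = (1/2)(1 + √(1 - k(ξ*)/k(ξ)))`. -/
noncomputable def rhoCPlus (k : ℝ → ℝ) (ξs ξ : ℝ) : ℝ :=
  1/2 * (1 + Real.sqrt (1 - k ξs / k ξ))

/-- Lower canard branch `ρ_c^-(ξ) = (1/2)(1 - √(1 - k(ξ*)/k(ξ)))`. -/
noncomputable def rhoCMinus (k : ℝ → ℝ) (ξs ξ : ℝ) : ℝ :=
  1/2 * (1 - Real.sqrt (1 - k ξs / k ξ))

/-- The singular canard `ρ_Sc`. -/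
noncomputable def rhoSc (k : ℝ → ℝ) (ξs ξ : ℝ) : ℝ :=
  if ξ ≤ ξs then rhoCPlus k ξs ξ else rhoCMinus k ξs ξ

open Filter Topology

theorem tendsto_div_sub_sq_of_hasDerivAt {f f' : ℝ → ℝ} {a ξ : ℝ}
    (hf : ∀ᶠ x in 𝓝 ξ, HasDerivAt f (f' x) x) (hfξ : f ξ = 0) (hf'ξ : f' ξ = 0)
    (hf' : HasDerivAt f' a ξ) :
    Tendsto (fun x => f x / (x - ξ) ^ 2) (𝓝[≠] ξ) (𝓝 (a / 2)) := by
  have hg : ∀ x, HasDerivAt (fun y => (y - ξ) ^ 2) (2 * (x - ξ)) x := fun x =>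
    (((hasDerivAt_id x).sub_const ξ).fun_pow 2).congr_deriv (by simp)
  have hf0 : Tendsto f (𝓝[≠] ξ) (𝓝 0) :=
    hfξ ▸ hf.self_of_nhds.continuousAt.tendsto.mono_left nhdsWithin_le_nhds
  have hg0 : Tendsto (fun y => (y - ξ) ^ 2) (𝓝[≠] ξ) (𝓝 0) := by
    simpa using ((hg ξ).continuousAt.tendsto.mono_left nhdsWithin_le_nhds)
  refine HasDerivAt.lhopital_zero_nhdsNE (nhdsWithin_le_nhds hf) (.of_forall hg) ?_ hf0 hg0 ?_
  · filter_upwards [self_mem_nhdsWithin] with x hx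
    simpa [sub_eq_zero] using hx
  · refine ((hasDerivAt_iff_tendsto_slope.mp hf').div_const 2).congr fun x => ?_
    rw [slope_def_field, hf'ξ, sub_zero, div_div, mul_comm]

theorem HasDerivAt.one_sub_const_div {k : ℝ → ℝ} {k' ξ : ℝ} (K : ℝ) (hk : HasDerivAt k k' ξ)
    (hkξ : k ξ ≠ 0) :
    HasDerivAt (fun x => 1 - K / k x) (K * k' / k ξ ^ 2) ξ := by
  refine ((hasDerivAt_const ξ 1).sub ((hasDerivAt_const ξ K).div hk hkξ)).congr_deriv ?_
  ring

theorem one_sub_div_pos_of_lt {a b : ℝ} (hb : 0 < b) (h : a < b) : 0 < 1 - a / b := by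
  rwa [sub_pos, div_lt_one hb]

theorem one_sub_two_mul_mul_eq_of_hasDerivAt {f k : ℝ → ℝ} {d C ξ : ℝ}
    (hf : HasDerivAt f d ξ) (hk : DifferentiableAt ℝ k ξ) (hkξ : k ξ ≠ 0)
    (hC : ∀ᶠ x in 𝓝 ξ, f x * (1 - f x) * k x = C) :
    (1 - 2 * f ξ) * d = -(deriv k ξ / k ξ) * f ξ * (1 - f ξ) := by
  have hprod := (hf.mul (hf.const_sub 1)).mul hk.hasDerivAt
  have hzero : (d * (1 - f ξ) + f ξ * -d) * k ξ + f ξ * (1 - f ξ) * deriv k ξ = 0 :=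
    hprod.unique ((hasDerivAt_const ξ C).congr_of_eventuallyEq hC)
  field_simp
  linear_combination hzero

section Canard

variable {k : ℝ → ℝ} {ξs x : ℝ}

theorem rhoSc_of_le (hx : x ≤ ξs) : rhoSc k ξs x = rhoCPlus k ξs x := if_pos hx

theorem rhoSc_of_lt (hx : ξs < x) : rhoSc k ξs x = rhoCMinus k ξs x := if_neg hx.not_ge

theorem rhoSc_self (hK : k ξs ≠ 0) : rhoSc k ξs ξs = 1 / 2 := by
  simp [rhoSc_of_le le_rfl, rhoCPlus, div_self hK]

theorem rhoSc_mul_one_sub_mul (hkx : 0 < k x) (hle : k ξs ≤ k x) :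
    rhoSc k ξs x * (1 - rhoSc k ξs x) * k x = k ξs / 4 := by
  have hs : √(1 - k ξs / k x) ^ 2 * k x = k x - k ξs := by
    rw [Real.sq_sqrt (by rwa [sub_nonneg, div_le_one hkx])]
    field_simp
  unfold rhoSc rhoCPlus rhoCMinus
  split_ifs <;> linear_combination (-1 / 4) * hs

theorem one_half_lt_rhoSc (hkx : 0 < k x) (hlt : k ξs < k x) (hx : x < ξs) :
    1 / 2 < rhoSc k ξs x := by
  have := Real.sqrt_pos.mpr (one_sub_div_pos_of_lt hkx hlt)
  rw [rhoSc_of_le hx.le, rhoCPlus]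
  linarith

theorem rhoSc_lt_one_half (hkx : 0 < k x) (hlt : k ξs < k x) (hx : ξs < x) :
    rhoSc k ξs x < 1 / 2 := by
  have := Real.sqrt_pos.mpr (one_sub_div_pos_of_lt hkx hlt)
  rw [rhoSc_of_lt hx, rhoCMinus]
  linarith

theorem differentiableAt_rhoSc (hk : DifferentiableAt ℝ k x) (hkx : 0 < k x)
    (hlt : k ξs < k x) (hx : x ≠ ξs) : DifferentiableAt ℝ (rhoSc k ξs) x := by
  have hsqrt : DifferentiableAt ℝ (fun y => √(1 - k ξs / k y)) x :=
    (((differentiableAt_const (k ξs)).div hk hkx.ne').const_sub 1).sqrt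
      (one_sub_div_pos_of_lt hkx hlt).ne'
  rcases hx.lt_or_gt with hleft | hright
  · refine ((hsqrt.const_add 1).const_mul (1 / 2)).congr_of_eventuallyEq ?_
    filter_upwards [Iio_mem_nhds hleft] with y hy
    rw [rhoSc_of_le (le_of_lt hy), rhoCPlus]
  · refine ((hsqrt.const_sub 1).const_mul (1 / 2)).congr_of_eventuallyEq ?_
    filter_upwards [Ioi_mem_nhds hright] with y hy
    rw [rhoSc_of_lt hy, rhoCMinus]

theorem tendsto_one_sub_div_div_sub_sq (hk : Differentiable ℝ k)
    (hk' : DifferentiableAt ℝ (deriv k) ξs) (hK : k ξs ≠ 0) (hcrit : deriv k ξs = 0) :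
    Tendsto (fun x => (1 - k ξs / k x) / (x - ξs) ^ 2) (𝓝[≠] ξs)
      (𝓝 (deriv (deriv k) ξs / (2 * k ξs))) := by
  have hkne : ∀ᶠ x in 𝓝 ξs, k x ≠ 0 := (hk ξs).continuousAt.eventually_ne hK
  have hk2 : HasDerivAt (fun x => k x ^ 2) 0 ξs := by
    simpa [hcrit] using (hk ξs).hasDerivAt.fun_pow 2
  have hf'' :
      HasDerivAt (fun x => k ξs * deriv k x / k x ^ 2) (deriv (deriv k) ξs / k ξs) ξs := by
    refine ((hk'.hasDerivAt.const_mul (k ξs)).fun_div hk2 (pow_ne_zero 2 hK)).congr_deriv ?_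
    field_simp
    ring
  have hlim := tendsto_div_sub_sq_of_hasDerivAt
    (hkne.mono fun x hx => (hk x).hasDerivAt.one_sub_const_div (k ξs) hx)
    (by simp [div_self hK]) (by simp [hcrit]) hf''
  rwa [div_div, mul_comm (k ξs)] at hlim

theorem slope_rhoSc_self (hK : k ξs ≠ 0) (hx : x ≠ ξs) :
    slope (rhoSc k ξs) ξs x = -(1 / 2) * √((1 - k ξs / k x) / (x - ξs) ^ 2) := by
  rw [slope_def_field, rhoSc_self hK, Real.sqrt_div' _ (sq_nonneg _), Real.sqrt_sq_eq_abs]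
  rcases hx.lt_or_gt with hlt | hgt
  · rw [rhoSc_of_le hlt.le, rhoCPlus, abs_of_neg (sub_neg.mpr hlt)]
    field_simp
    ring
  · rw [rhoSc_of_lt hgt, rhoCMinus, abs_of_pos (sub_pos.mpr hgt)]
    field_simp
    ring

theorem hasDerivAt_rhoSc_self (hk : Differentiable ℝ k)
    (hk' : DifferentiableAt ℝ (deriv k) ξs) (hK : k ξs ≠ 0) (hcrit : deriv k ξs = 0) :
    HasDerivAt (rhoSc k ξs) (-(1 / 2) * √(deriv (deriv k) ξs / (2 * k ξs))) ξs := by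
  rw [hasDerivAt_iff_tendsto_slope]
  refine (((Real.continuous_sqrt.tendsto _).comp
    (tendsto_one_sub_div_div_sub_sq hk hk' hK hcrit)).const_mul _).congr' ?_
  filter_upwards [self_mem_nhdsWithin] with x hx
  exact (slope_rhoSc_self hK hx).symm

end Canard

theorem canard_solution_through_folded_saddle_general
    (k : ℝ → ℝ) (ξs : ℝ)
    (hk : ContDiff ℝ 2 k)
    (hkpos : ∀ x ∈ Icc (0:ℝ) 1, 0 < k x)
    (hξs : ξs ∈ Ioo (0:ℝ) 1)
    (hmin : ∀ x ∈ Icc (0:ℝ) 1, x ≠ ξs → k ξs < k x)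
    (hk's : deriv k ξs = 0) :
    ∃ d : ℝ → ℝ,
      (∀ ξ ∈ Ioo (0:ℝ) 1,
        HasDerivAt (rhoSc k ξs) (d ξ) ξ ∧
        (1 - 2 * rhoSc k ξs ξ) * d ξ =
          -(deriv k ξ / k ξ) * rhoSc k ξs ξ * (1 - rhoSc k ξs ξ)) ∧
      d ξs = -(1/2) * Real.sqrt (deriv (deriv k) ξs / (2 * k ξs)) ∧
      (∀ ξ ∈ Ioo (0:ℝ) 1, ξ < ξs → 1/2 < rhoSc k ξs ξ) ∧
      (∀ ξ ∈ Ioo (0:ℝ) 1, ξs < ξ → rhoSc k ξs ξ < 1/2) := by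
  have hdk : Differentiable ℝ k := hk.differentiable (by norm_num)
  have hpos : ∀ ξ ∈ Ioo (0:ℝ) 1, 0 < k ξ := fun ξ hξ => hkpos ξ (Ioo_subset_Icc_self hξ)
  have hlt : ∀ ξ ∈ Ioo (0:ℝ) 1, ξ ≠ ξs → k ξs < k ξ :=
    fun ξ hξ => hmin ξ (Ioo_subset_Icc_self hξ)
  have hcanard := hasDerivAt_rhoSc_self hdk (hk.differentiable_deriv_two ξs)
    (hpos ξs hξs).ne' hk's
  have hderiv : ∀ ξ ∈ Ioo (0:ℝ) 1, HasDerivAt (rhoSc k ξs) (deriv (rhoSc k ξs) ξ) ξ := by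
    intro ξ hξ
    rcases eq_or_ne ξ ξs with rfl | hne
    · exact hcanard.differentiableAt.hasDerivAt
    · exact (differentiableAt_rhoSc (hdk ξ) (hpos ξ hξ) (hlt ξ hξ hne) hne).hasDerivAt
  refine ⟨deriv (rhoSc k ξs), fun ξ hξ => ⟨hderiv ξ hξ, ?_⟩, hcanard.deriv,
    fun ξ hξ h => one_half_lt_rhoSc (hpos ξ hξ) (hlt ξ hξ h.ne) h,
    fun ξ hξ h => rhoSc_lt_one_half (hpos ξ hξ) (hlt ξ hξ h.ne') h⟩
  refine one_sub_two_mul_mul_eq_of_hasDerivAt (C := k ξs / 4) (hderiv ξ hξ) (hdk ξ)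
    (hpos ξ hξ).ne' ?_
  filter_upwards [isOpen_Ioo.mem_nhds hξ] with x hx
  rcases eq_or_ne x ξs with rfl | hne
  · exact rhoSc_mul_one_sub_mul (hpos x hx) le_rfl
  · exact rhoSc_mul_one_sub_mul (hpos x hx) (hlt x hx hne).le

/-- The canard function `ρ_Sc` is differentiable on `(0,1)`, satisfies the
reduced ODE `(1 - 2ρ)ρ' = -g ρ(1-ρ)` there, has derivative
`-(1/2)√(k''(ξ*)/(2k(ξ*)))` at the canard point `ξ*`, and crosses from `ρ > 1/2`
(for `ξ < ξ*`) to `ρ < 1/2` (for `ξ > ξ*`): it passes smoothly through the folded saddle. -/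
theorem canard_solution_through_folded_saddle
    (k : ℝ → ℝ) (ξs : ℝ)
    (hk : ContDiff ℝ 2 k)
    (hkpos : ∀ x ∈ Icc (0:ℝ) 1, 0 < k x)
    (hξs : ξs ∈ Ioo (0:ℝ) 1)
    (hmin : ∀ x ∈ Icc (0:ℝ) 1, x ≠ ξs → k ξs < k x)
    (hk's : deriv k ξs = 0)
    (hk''s : 0 < deriv (deriv k) ξs) :
    ∃ d : ℝ → ℝ,
      (∀ ξ ∈ Ioo (0:ℝ) 1,
        HasDerivAt (rhoSc k ξs) (d ξ) ξ ∧
        (1 - 2 * rhoSc k ξs ξ) * d ξ =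
          -(deriv k ξ / k ξ) * rhoSc k ξs ξ * (1 - rhoSc k ξs ξ)) ∧
      d ξs = -(1/2) * Real.sqrt (deriv (deriv k) ξs / (2 * k ξs)) ∧
      (∀ ξ ∈ Ioo (0:ℝ) 1, ξ < ξs → 1/2 < rhoSc k ξs ξ) ∧
      (∀ ξ ∈ Ioo (0:ℝ) 1, ξs < ξ → rhoSc k ξs ξ < 1/2) :=
  canard_solution_through_folded_saddle_general k ξs hk hkpos hξs hmin hk's
end

section
/- There is no continuously differentiable function ρ : [0, ξ*] → ℝ satisfying the reduced ODE (1 − 2ρ(ξ)) ρ'(ξ) = −g(ξ) ρ(ξ)(1 − ρ(ξ)) on [0, ξ*] whose initial value satisfies ρ_c^0 < ρ(0) < 1 − ρ_c^0; i.e., solutions of the reduced problem starting at ξ = 0 strictly between the two canard values cannot reach the line ξ = ξ*. -/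
open Set

/-- No continuously differentiable solution of the reduced ODE on `[0, ξ*]`
can start at `ξ = 0` strictly between the two canard values `ρ_c^0` and `1 - ρ_c^0`,
where `ρ_c^0 = (1/2)(1 - √(1 - k(ξ*)/k(0)))`: such reduced orbits cannot reach `ξ = ξ*`. -/
theorem no_reduced_solution_between_canards
    (k : ℝ → ℝ) (ξs : ℝ)
    (hk : ContDiff ℝ 2 k)
    (hkpos : ∀ x ∈ Icc (0:ℝ) 1, 0 < k x)
    (hξs : ξs ∈ Ioo (0:ℝ) 1)
    (hmin : ∀ x ∈ Icc (0:ℝ) 1, x ≠ ξs → k ξs < k x)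
    (hk's : deriv k ξs = 0)
    (hk''s : 0 < deriv (deriv k) ξs)
    (ρ ρ' : ℝ → ℝ)
    (hρ : ∀ ξ ∈ Icc 0 ξs, HasDerivWithinAt ρ (ρ' ξ) (Icc 0 ξs) ξ)
    (hρ'cont : ContinuousOn ρ' (Icc 0 ξs))
    (hode : ∀ ξ ∈ Icc 0 ξs,
      (1 - 2 * ρ ξ) * ρ' ξ = -(deriv k ξ / k ξ) * ρ ξ * (1 - ρ ξ)) :
    ¬ (1/2 * (1 - Real.sqrt (1 - k ξs / k 0)) < ρ 0 ∧
       ρ 0 < 1 - 1/2 * (1 - Real.sqrt (1 - k ξs / k 0))) := by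
  rintro ⟨h1, h2⟩
  have hξs0 : (0:ℝ) < ξs := hξs.1
  have hk0 : 0 < k 0 := hkpos 0 ⟨le_refl _, zero_le_one⟩
  have hks : 0 < k ξs := hkpos ξs ⟨hξs.1.le, hξs.2.le⟩
  have hlt : k ξs < k 0 := hmin 0 ⟨le_refl _, zero_le_one⟩ (by linarith)
  have hnn : (0:ℝ) ≤ 1 - k ξs / k 0 := by
    have : k ξs / k 0 ≤ 1 := (div_le_one hk0).2 hlt.le
    linarith
  have hsq : Real.sqrt (1 - k ξs / k 0) ^ 2 = 1 - k ξs / k 0 := Real.sq_sqrt hnn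
  -- conserved quantity F = ρ (1-ρ) k
  set F : ℝ → ℝ := fun t => ρ t * (1 - ρ t) * k t with hFdef
  have hF : ∀ x ∈ Icc (0:ℝ) ξs, HasDerivWithinAt F 0 (Icc 0 ξs) x := by
    intro x hx
    have hkx : 0 < k x := hkpos x ⟨hx.1, hx.2.trans hξs.2.le⟩
    have hkd : HasDerivWithinAt k (deriv k x) (Icc 0 ξs) x :=
      ((hk.differentiable (by norm_num)) x).hasDerivAt.hasDerivWithinAt
    have hmulF :
        HasDerivWithinAt F
          ((ρ' x * (1 - ρ x) + ρ x * (0 - ρ' x)) * k x + ρ x * (1 - ρ x) * deriv k x)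
          (Icc 0 ξs) x :=
      ((hρ x hx).mul ((hasDerivWithinAt_const x _ (1:ℝ)).sub (hρ x hx))).mul hkd
    have hodex := hode x hx
    have hne : k x ≠ 0 := hkx.ne'
    have key : (ρ' x * (1 - ρ x) + ρ x * (0 - ρ' x)) * k x + ρ x * (1 - ρ x) * deriv k x = 0 := by
      field_simp at hodex
      linear_combination hodex
    rwa [key] at hmulF
  have hcont : ContinuousOn F (Icc 0 ξs) := fun x hx => (hF x hx).continuousWithinAt
  have hderiv : ∀ x ∈ Ico (0:ℝ) ξs, HasDerivWithinAt F 0 (Ici x) x := by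
    intro x hx
    exact (hF x ⟨hx.1, hx.2.le⟩).mono_of_mem_nhdsWithin (Icc_mem_nhdsGE_of_mem hx)
  have hconst := constant_of_has_deriv_right_zero hcont hderiv ξs ⟨hξs0.le, le_refl _⟩
  -- hconst : F ξs = F 0
  have hbound : ρ ξs * (1 - ρ ξs) ≤ 1/4 := by nlinarith [sq_nonneg (1 - 2 * ρ ξs)]
  have hFs : F ξs ≤ k ξs / 4 := by
    have := mul_le_mul_of_nonneg_right hbound hks.le
    simpa [hFdef] using by linarith [this]
  have hF0 : k ξs / 4 < F 0 := by
    have hA : 0 < ρ 0 - 1/2 * (1 - Real.sqrt (1 - k ξs / k 0)) := by linarith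
    have hB : 0 < 1 - 1/2 * (1 - Real.sqrt (1 - k ξs / k 0)) - ρ 0 := by linarith
    have hAB := mul_pos hA hB
    have hsq' : Real.sqrt (1 - k ξs / k 0) ^ 2 * k 0 = k 0 - k ξs := by
      rw [hsq]; field_simp
    simp only [hFdef]
    nlinarith [mul_pos hAB hk0, hsq']
  linarith [hconst, hFs, hF0]
end

section
/- Let ρ : [0,1] → [0,1] be continuously differentiable and satisfy the reduced ODE (1 − 2ρ(ξ)) ρ'(ξ) = −g(ξ) ρ(ξ)(1 − ρ(ξ)) on [0,1]. If 0 ≤ ρ(0) < ρ_c^0 then ρ(ξ) < 1/2 for all ξ ∈ [0,1] and 0 ≤ ρ(1) < 1 − ρ_c^1. Symmetrically, if 1 − ρ_c^0 < ρ(0) ≤ 1 then ρ(ξ) > 1/2 for all ξ ∈ [0,1] and ρ_c^1 < ρ(1) ≤ 1. -/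
open Set

/-!
`k ρ (1 - ρ)` is a first integral of the reduced ODE. Since `(1 - 2ρ)² = 1 - 4ρ(1 - ρ)`,
the inequality `ρ(ξ) < (1 - √(1 - k(ξ*)/k(ξ)))/2` says `ρ(ξ) < 1/2` and
`4 k(ξ) ρ(ξ)(1 - ρ(ξ)) < k(ξ*)`. If it holds at `ξ = 0`, the first integral stays below
`k(ξ*)/4 ≤ k/4`, so `ρ` never reaches `1/2` and the inequality holds at every `ξ`; at `ξ = 1`
it is `ρ(1) < 1 - ρ_c^1`. The case above `1/2` follows from the symmetry `ρ ↦ 1 - ρ` of the ODE.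
-/

theorem lt_half_mul_one_sub_sqrt_iff {x m κ : ℝ} (hκ : 0 < κ) :
    x < 1/2 * (1 - √(1 - m / κ)) ↔ x < 1/2 ∧ 4 * (κ * (x * (1 - x))) < m := by
  have hsquare : 4 * (κ * (x * (1 - x))) < m ↔ 1 - m / κ < (1 - 2 * x) ^ 2 := by
    rw [show (1 - 2 * x) ^ 2 = 1 - 4 * (x * (1 - x)) by ring, sub_lt_sub_iff_left,
      lt_div_iff₀ hκ]
    constructor <;> intro h <;> linarith
  constructor
  · intro hx
    have hpos : 0 < 1 - 2 * x := by nlinarith [Real.sqrt_nonneg (1 - m / κ)]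
    exact ⟨by linarith, hsquare.2 ((Real.sqrt_lt' hpos).1 (by linarith))⟩
  · rintro ⟨hx, hF⟩
    have hpos : 0 < 1 - 2 * x := by linarith
    linarith [(Real.sqrt_lt' hpos).2 (hsquare.1 hF)]

def IsReducedSolution (k ρ ρ' : ℝ → ℝ) (s : Set ℝ) : Prop :=
  ∀ ξ ∈ s, HasDerivWithinAt ρ (ρ' ξ) s ξ ∧
    (1 - 2 * ρ ξ) * ρ' ξ = -(deriv k ξ / k ξ) * ρ ξ * (1 - ρ ξ)

namespace IsReducedSolution

variable {k ρ ρ' : ℝ → ℝ} {s : Set ℝ}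

theorem one_sub (h : IsReducedSolution k ρ ρ' s) :
    IsReducedSolution k (fun ξ => 1 - ρ ξ) (fun ξ => -ρ' ξ) s := fun ξ hξ =>
  ⟨(h ξ hξ).1.const_sub 1, by linear_combination (h ξ hξ).2⟩

theorem continuousOn (h : IsReducedSolution k ρ ρ' s) : ContinuousOn ρ s :=
  fun ξ hξ => (h ξ hξ).1.continuousWithinAt

theorem hasDerivWithinAt_firstIntegral (h : IsReducedSolution k ρ ρ' s)
    (hk : ∀ ξ ∈ s, DifferentiableAt ℝ k ξ) (hk0 : ∀ ξ ∈ s, k ξ ≠ 0) {ξ : ℝ} (hξ : ξ ∈ s) :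
    HasDerivWithinAt (fun x => k x * (ρ x * (1 - ρ x))) 0 s ξ := by
  obtain ⟨hρ, hode⟩ := h ξ hξ
  have hderiv := (hk ξ hξ).hasDerivAt.hasDerivWithinAt.mul (hρ.mul (hρ.const_sub 1))
  refine hderiv.congr_deriv ?_
  field_simp [hk0 ξ hξ] at hode
  simp only [Pi.mul_apply]
  linear_combination hode

theorem firstIntegral_eq (h : IsReducedSolution k ρ ρ' s) (hs : Convex ℝ s)
    (hk : ∀ ξ ∈ s, DifferentiableAt ℝ k ξ) (hk0 : ∀ ξ ∈ s, k ξ ≠ 0) {a ξ : ℝ}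
    (ha : a ∈ s) (hξ : ξ ∈ s) :
    k ξ * (ρ ξ * (1 - ρ ξ)) = k a * (ρ a * (1 - ρ a)) := by
  have hlip := hs.norm_image_sub_le_of_norm_hasDerivWithin_le
    (fun x hx => h.hasDerivWithinAt_firstIntegral hk hk0 hx) (fun _ _ => norm_zero.le) ha hξ
  simpa [sub_eq_zero] using hlip

theorem lt_threshold (h : IsReducedSolution k ρ ρ' s) (hs : Convex ℝ s)
    (hk : ∀ ξ ∈ s, DifferentiableAt ℝ k ξ) (hkpos : ∀ ξ ∈ s, 0 < k ξ) {m : ℝ}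
    (hmin : ∀ ξ ∈ s, m ≤ k ξ) {a : ℝ} (ha : a ∈ s) (hρa : ρ a < 1/2 * (1 - √(1 - m / k a)))
    {ξ : ℝ} (hξ : ξ ∈ s) :
    ρ ξ < 1/2 * (1 - √(1 - m / k ξ)) := by
  obtain ⟨hρa_half, hFa⟩ := (lt_half_mul_one_sub_sqrt_iff (hkpos a ha)).1 hρa
  have hF : ∀ x ∈ s, 4 * (k x * (ρ x * (1 - ρ x))) < m := fun x hx => by
    rw [h.firstIntegral_eq hs hk (fun y hy => (hkpos y hy).ne') ha hx]
    exact hFa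
  have hne_half : ∀ x ∈ s, ρ x ≠ 1/2 := fun x hx hx_half => by
    have hFx := hF x hx
    rw [hx_half] at hFx
    linarith [hmin x hx]
  have hρξ_half : ρ ξ < 1/2 := by
    by_contra! hge
    obtain ⟨x, hx, hx_half⟩ :=
      hs.isPreconnected.intermediate_value ha hξ h.continuousOn ⟨hρa_half.le, hge⟩
    exact hne_half x hx hx_half
  exact (lt_half_mul_one_sub_sqrt_iff (hkpos ξ hξ)).2 ⟨hρξ_half, hF ξ hξ⟩

end IsReducedSolution

theorem reduced_solutions_outside_canards_general
    (k : ℝ → ℝ) (ξs : ℝ)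
    (hk : ContDiff ℝ 2 k)
    (hkpos : ∀ x ∈ Icc (0:ℝ) 1, 0 < k x)
    (hmin : ∀ x ∈ Icc (0:ℝ) 1, x ≠ ξs → k ξs < k x)
    (ρ ρ' : ℝ → ℝ)
    (hrange : ∀ ξ ∈ Icc (0:ℝ) 1, ρ ξ ∈ Icc (0:ℝ) 1)
    (hρ : ∀ ξ ∈ Icc (0:ℝ) 1, HasDerivWithinAt ρ (ρ' ξ) (Icc (0:ℝ) 1) ξ)
    (hode : ∀ ξ ∈ Icc (0:ℝ) 1,
      (1 - 2 * ρ ξ) * ρ' ξ = -(deriv k ξ / k ξ) * ρ ξ * (1 - ρ ξ)) :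
    (ρ 0 < 1/2 * (1 - Real.sqrt (1 - k ξs / k 0)) →
      (∀ ξ ∈ Icc (0:ℝ) 1, ρ ξ < 1/2) ∧
      0 ≤ ρ 1 ∧ ρ 1 < 1 - 1/2 * (1 + Real.sqrt (1 - k ξs / k 1))) ∧
    (1 - 1/2 * (1 - Real.sqrt (1 - k ξs / k 0)) < ρ 0 →
      (∀ ξ ∈ Icc (0:ℝ) 1, 1/2 < ρ ξ) ∧
      1/2 * (1 + Real.sqrt (1 - k ξs / k 1)) < ρ 1 ∧ ρ 1 ≤ 1) := by
  have h0 : (0:ℝ) ∈ Icc (0:ℝ) 1 := by norm_num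
  have h1 : (1:ℝ) ∈ Icc (0:ℝ) 1 := by norm_num
  have hmin' : ∀ x ∈ Icc (0:ℝ) 1, k ξs ≤ k x := fun x hx => by
    rcases eq_or_ne x ξs with rfl | hne
    exacts [le_rfl, (hmin x hx hne).le]
  have hsol : IsReducedSolution k ρ ρ' (Icc 0 1) := fun ξ hξ => ⟨hρ ξ hξ, hode ξ hξ⟩
  have hkd : ∀ ξ ∈ Icc (0:ℝ) 1, DifferentiableAt ℝ k ξ :=
    fun ξ _ => hk.differentiable (by norm_num) ξ
  have below : ∀ {σ σ' : ℝ → ℝ}, IsReducedSolution k σ σ' (Icc 0 1) →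
      σ 0 < 1/2 * (1 - √(1 - k ξs / k 0)) →
      ∀ ξ ∈ Icc (0:ℝ) 1, σ ξ < 1/2 * (1 - √(1 - k ξs / k ξ)) := fun h hσ0 _ hξ =>
    h.lt_threshold (convex_Icc 0 1) hkd hkpos hmin' h0 hσ0 hξ
  have half_of_threshold : ∀ x, 1/2 * (1 - √(1 - k ξs / k x)) ≤ 1/2 :=
    fun x => by linarith [Real.sqrt_nonneg (1 - k ξs / k x)]
  constructor
  · intro hρ0
    have hbelow := below hsol hρ0
    exact ⟨fun ξ hξ => (hbelow ξ hξ).trans_le (half_of_threshold ξ), (hrange 1 h1).1,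
      by linarith [hbelow 1 h1]⟩
  · intro hρ0
    have habove := below hsol.one_sub (by linarith)
    exact ⟨fun ξ hξ => by linarith [habove ξ hξ, half_of_threshold ξ],
      by linarith [habove 1 h1], (hrange 1 h1).2⟩

/-- A continuously differentiable solution `ρ : [0,1] → [0,1]` of the reduced
ODE starting below `ρ_c^0 = (1/2)(1-√(1-k(ξ*)/k(0)))` stays below the fold line `ρ = 1/2`
and ends with `0 ≤ ρ(1) < 1 - ρ_c^1` where `ρ_c^1 = (1/2)(1+√(1-k(ξ*)/k(1)))`;
symmetrically, starting above `1 - ρ_c^0` it stays above `1/2` and ends with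
`ρ_c^1 < ρ(1) ≤ 1`. -/
theorem reduced_solutions_outside_canards
    (k : ℝ → ℝ) (ξs : ℝ)
    (hk : ContDiff ℝ 2 k)
    (hkpos : ∀ x ∈ Icc (0:ℝ) 1, 0 < k x)
    (hξs : ξs ∈ Ioo (0:ℝ) 1)
    (hmin : ∀ x ∈ Icc (0:ℝ) 1, x ≠ ξs → k ξs < k x)
    (hk's : deriv k ξs = 0)
    (hk''s : 0 < deriv (deriv k) ξs)
    (ρ ρ' : ℝ → ℝ)
    (hrange : ∀ ξ ∈ Icc (0:ℝ) 1, ρ ξ ∈ Icc (0:ℝ) 1)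
    (hρ : ∀ ξ ∈ Icc (0:ℝ) 1, HasDerivWithinAt ρ (ρ' ξ) (Icc (0:ℝ) 1) ξ)
    (hρ'cont : ContinuousOn ρ' (Icc (0:ℝ) 1))
    (hode : ∀ ξ ∈ Icc (0:ℝ) 1,
      (1 - 2 * ρ ξ) * ρ' ξ = -(deriv k ξ / k ξ) * ρ ξ * (1 - ρ ξ)) :
    (ρ 0 < 1/2 * (1 - Real.sqrt (1 - k ξs / k 0)) →
      (∀ ξ ∈ Icc (0:ℝ) 1, ρ ξ < 1/2) ∧
      0 ≤ ρ 1 ∧ ρ 1 < 1 - 1/2 * (1 + Real.sqrt (1 - k ξs / k 1))) ∧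
    (1 - 1/2 * (1 - Real.sqrt (1 - k ξs / k 0)) < ρ 0 →
      (∀ ξ ∈ Icc (0:ℝ) 1, 1/2 < ρ ξ) ∧
      1/2 * (1 + Real.sqrt (1 - k ξs / k 1)) < ρ 1 ∧ ρ 1 ≤ 1) :=
  reduced_solutions_outside_canards_general k ξs hk hkpos hmin ρ ρ' hrange hρ hode
end
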